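/- Let A be a unital C*-algebra, φ : A → ℂ a state, and f a convex function defined on an open interval (α, β). Then for every self-adjoint element a ∈ A whose spectrum is contained in (α, β), one has f(φ(a)) ≤ φ(f(a)). -/
import Mathlib


open scoped ComplexOrder

/-- A convex function on an open interval has a subgradient at every point. -/
lemma exists_subgrad {α β : ℝ} {f : ℝ → ℝ} (hf : ConvexOn ℝ (Set.Ioo α β) f) {x₀ : ℝ}
    (hx₀ : x₀ ∈ Set.Ioo α β) :
    ∃ c : ℝ, ∀ x ∈ Set.Ioo α β, f x₀ + c * (x - x₀) ≤ f x := by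
  obtain ⟨hx₀α, hx₀β⟩ := hx₀
  set S : Set ℝ := (fun y => (f x₀ - f y) / (x₀ - y)) '' Set.Ioo α x₀ with hS
  have hSne : S.Nonempty := ⟨_, ⟨(α + x₀) / 2, ⟨by linarith, by linarith⟩, rfl⟩⟩
  set z := (x₀ + β) / 2 with hzdef
  have hz : z ∈ Set.Ioo α β := ⟨by simp only [hzdef]; linarith, by simp only [hzdef]; linarith⟩
  have hbd : ∀ s ∈ S, s ≤ (f z - f x₀) / (z - x₀) := by
    rintro s ⟨y, hy, rfl⟩
    exact hf.slope_mono_adjacent ⟨hy.1, hy.2.trans hx₀β⟩ hz hy.2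
      (by simp only [hzdef]; linarith)
  set c := sSup S with hc
  refine ⟨c, fun x hx => ?_⟩
  rcases lt_trichotomy x x₀ with h | h | h
  · have hm : (f x₀ - f x) / (x₀ - x) ≤ c :=
      le_csSup ⟨_, hbd⟩ ⟨x, ⟨hx.1, h⟩, rfl⟩
    have hpos : (0 : ℝ) < x₀ - x := by linarith
    rw [div_le_iff₀ hpos] at hm
    have hring : c * (x - x₀) = -(c * (x₀ - x)) := by ring
    linarith
  · simp [h]
  · have hub : ∀ s ∈ S, s ≤ (f x - f x₀) / (x - x₀) := by
      rintro s ⟨y, hy, rfl⟩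
      exact hf.slope_mono_adjacent ⟨hy.1, hy.2.trans hx₀β⟩ hx hy.2 h
    have hcle : c ≤ (f x - f x₀) / (x - x₀) := csSup_le hSne hub
    rw [le_div_iff₀ (by linarith : (0 : ℝ) < x - x₀)] at hcle
    linarith

/-- Jensen's inequality for states on a unital C*-algebra: if `φ` is a state on `A`,
`f` is convex on the open interval `(α, β)`, and `a` is selfadjoint with spectrum in
`(α, β)`, then `f(φ(a)) ≤ φ(f(a))`. -/
theorem jensen_state {A : Type*} [CStarAlgebra A] [PartialOrder A] [StarOrderedRing A]
    (φ : A →ₗ[ℂ] ℂ) (hφ_pos : ∀ x : A, 0 ≤ x → 0 ≤ φ x) (hφ_unital : φ 1 = 1)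
    (α β : ℝ) (f : ℝ → ℝ) (hf : ConvexOn ℝ (Set.Ioo α β) f)
    (a : A) (ha : IsSelfAdjoint a) (hspec : spectrum ℝ a ⊆ Set.Ioo α β) :
    f (φ a).re ≤ (φ (cfc f a)).re := by
  -- A is nontrivial
  have hA : Nontrivial A := by
    by_contra h
    rw [not_nontrivial_iff_subsingleton] at h
    have h10 : (1 : A) = 0 := Subsingleton.elim _ _
    rw [h10, map_zero] at hφ_unital
    exact one_ne_zero hφ_unital.symm
  -- φ is monotone on real parts
  have hmono : ∀ x y : A, x ≤ y → (φ x).re ≤ (φ y).re := by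
    intro x y hxy
    have h0 := hφ_pos _ (sub_nonneg.mpr hxy)
    rw [map_sub] at h0
    have := (Complex.le_def.mp h0).1
    simp only [Complex.zero_re, Complex.sub_re] at this
    linarith
  -- φ of real scalar multiples of 1
  have hφsmul : ∀ r : ℝ, φ (algebraMap ℝ A r) = (r : ℂ) := by
    intro r
    rw [Algebra.algebraMap_eq_smul_one, ← algebraMap_smul ℂ r (1 : A), map_smul, hφ_unital,
      smul_eq_mul, mul_one]
    simp [Algebra.algebraMap_eq_smul_one]
  -- spectrum is compact and nonempty
  have h_cpct : IsCompact (spectrum ℝ a) := isCompact_iff_compactSpace.mpr inferInstance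
  have hne : (spectrum ℝ a).Nonempty := ha.spectrum_nonempty
  set m := sInf (spectrum ℝ a) with hm
  set M := sSup (spectrum ℝ a) with hM
  have hm_mem : m ∈ spectrum ℝ a := h_cpct.sInf_mem hne
  have hM_mem : M ∈ spectrum ℝ a := h_cpct.sSup_mem hne
  have hm_le : algebraMap ℝ A m ≤ a :=
    algebraMap_le_of_le_spectrum fun x hx => csInf_le h_cpct.bddBelow hx
  have hM_ge : a ≤ algebraMap ℝ A M :=
    le_algebraMap_of_spectrum_le fun x hx => le_csSup h_cpct.bddAbove hx
  set x₀ := (φ a).re with hx₀def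
  have hmx₀ : m ≤ x₀ := by
    have := hmono _ _ hm_le
    rwa [hφsmul, Complex.ofReal_re] at this
  have hx₀M : x₀ ≤ M := by
    have := hmono _ _ hM_ge
    rwa [hφsmul, Complex.ofReal_re] at this
  have hx₀ : x₀ ∈ Set.Ioo α β :=
    ⟨lt_of_lt_of_le (hspec hm_mem).1 hmx₀, lt_of_le_of_lt hx₀M (hspec hM_mem).2⟩
  obtain ⟨c, hc⟩ := exists_subgrad hf hx₀
  -- the affine minorant
  have hgf : cfc (fun x : ℝ => f x₀ + c * (x - x₀)) a ≤ cfc f a := by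
    refine cfc_mono (fun x hx => hc x (hspec hx)) ?_ ?_
    · fun_prop
    · exact (hf.continuousOn isOpen_Ioo).mono hspec
  have hg_eq : cfc (fun x : ℝ => f x₀ + c * (x - x₀)) a
      = algebraMap ℝ A (f x₀ - c * x₀) + c • a := by
    have heq : (fun x : ℝ => f x₀ + c * (x - x₀)) = fun x : ℝ => (f x₀ - c * x₀) + c * x := by
      ext x; ring
    rw [heq, cfc_const_add (f x₀ - c * x₀) (fun x : ℝ => c * x) a (by fun_prop) ha,
      cfc_const_mul_id c a ha]
  have hφg : (φ (cfc (fun x : ℝ => f x₀ + c * (x - x₀)) a)).re = f x₀ := by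
    rw [hg_eq, map_add, hφsmul, ← algebraMap_smul ℂ c a, map_smul]
    simp only [Complex.coe_algebraMap, Complex.add_re, Complex.ofReal_re, smul_eq_mul,
      Complex.mul_re, Complex.ofReal_im, zero_mul, sub_zero, hx₀def]
    ring
  have := hmono _ _ hgf
  rw [hφg] at this
  exact this
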